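/- For the Gaussian scale model in dimension d with s = e^{2θ*} and Gaussian kernel of lengthscale l, the mean estimating-function value satisfies M̄ = -(2π)^{-d/2} (l² + 2s)^{-d/2} (ds/(s+l²)) (1 - s/(l²+2s)). In particular M̄ ≠ 0 for all finite l > 0, d ≥ 1, s > 0. -/

import Mathlib

open Finset MeasureTheory

/-- `d`-dimensional isotropic Gaussian density with mean `m` and variance `v`. -/
noncomputable def gaussPdfD (d : ℕ) (x m : Fin d → ℝ) (v : ℝ) : ℝ :=
  (2 * Real.pi * v) ^ (-(d : ℝ) / 2)
    * Real.exp (-(∑ i, (x i - m i) ^ 2) / (2 * v))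

/-! The two centred densities, of variances `a = s + l²` and `s`, multiply to the constant
`φ(0; 0, a + s) = (2π (l² + 2s))^{-d/2}` times the centred density of variance
`v = a s / (a + s)`. The integral therefore only involves the mass `1` and the second moment
`d v` of one Gaussian, and
`(s / a²) d v - d s / a = -(d s / a) (1 - s / (l² + 2s))`, a negative number when `d ≥ 1`. -/

open ProbabilityTheory

namespace ProbabilityTheory

lemma integral_sq_sub_mul_gaussianPDFReal (μ : ℝ) (v : NNReal) :
    ∫ x, (x - μ) ^ 2 * gaussianPDFReal μ v x = v := by
  rcases eq_or_ne v 0 with rfl | hv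
  · simp
  calc ∫ x, (x - μ) ^ 2 * gaussianPDFReal μ v x
      = ∫ x, (x - μ) ^ 2 ∂gaussianReal μ v := by
        rw [integral_gaussianReal_eq_integral_smul hv]
        simp only [smul_eq_mul, mul_comm]
    _ = v := by
        rw [← variance_fun_id_gaussianReal (μ := μ) (v := v),
          variance_eq_integral measurable_id'.aemeasurable, integral_id_gaussianReal]

end ProbabilityTheory

section Fubini

variable {ι E 𝕜 : Type*} [Fintype ι] [DecidableEq ι] [RCLike 𝕜] [MeasureSpace E]
  [SigmaFinite (volume : Measure E)]

theorem integral_comp_mul_fintype_prod_volume (g : E → 𝕜) (f : ι → E → 𝕜) (i : ι) :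
    ∫ x : ι → E, g (x i) * ∏ j, f j (x j)
      = (∫ t, g t * f i t) * ∏ j ∈ univ.erase i, ∫ t, f j t := by
  set F := Function.update f i (fun t => g t * f i t)
  have hF : ∀ x : ι → E, g (x i) * ∏ j, f j (x j) = ∏ j, F j (x j) := by
    intro x
    rw [← mul_prod_erase _ _ (mem_univ i), ← mul_prod_erase _ _ (mem_univ i)]
    simp only [F, Function.update_self, mul_assoc]
    congr 2
    exact prod_congr rfl fun j hj => by rw [Function.update_of_ne (ne_of_mem_erase hj)]
  simp only [hF, integral_fintype_prod_volume_eq_prod]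
  rw [← mul_prod_erase _ _ (mem_univ i)]
  simp only [F, Function.update_self]
  congr 1
  exact prod_congr rfl fun j hj => by rw [Function.update_of_ne (ne_of_mem_erase hj)]

end Fubini

section GaussPdfD

variable {d : ℕ} {x m : Fin d → ℝ} {v : ℝ}

lemma gaussPdfD_eq_prod (hv : 0 ≤ v) :
    gaussPdfD d x m v = ∏ i, gaussianPDFReal (m i) v.toNNReal (x i) := by
  have hc : (2 * Real.pi * v) ^ (-(d : ℝ) / 2) = ((√(2 * Real.pi * v))⁻¹) ^ d := by
    rw [Real.sqrt_eq_rpow, ← Real.rpow_neg (by positivity), ← Real.rpow_natCast,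
      ← Real.rpow_mul (by positivity)]
    ring_nf
  simp only [gaussianPDFReal, Real.coe_toNNReal _ hv, prod_mul_distrib, prod_const, card_univ,
    Fintype.card_fin, ← Real.exp_sum, gaussPdfD, hc, ← sum_div, sum_neg_distrib]

lemma gaussPdfD_self : gaussPdfD d m m v = (2 * Real.pi * v) ^ (-(d : ℝ) / 2) := by
  simp [gaussPdfD]

lemma integrable_gaussPdfD (hv : 0 ≤ v) : Integrable (fun x => gaussPdfD d x m v) := by
  simp only [gaussPdfD_eq_prod hv]
  exact Integrable.fintype_prod (f := fun i => gaussianPDFReal (m i) v.toNNReal)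
    fun i => integrable_gaussianPDFReal _ _

lemma integral_gaussPdfD (hv : 0 < v) : ∫ x, gaussPdfD d x m v = 1 := by
  simp only [gaussPdfD_eq_prod hv.le]
  rw [integral_fintype_prod_volume_eq_prod]
  simp [integral_gaussianPDFReal_eq_one _ (Real.toNNReal_pos.mpr hv).ne']

lemma integral_sq_sub_mul_gaussPdfD (hv : 0 < v) (i : Fin d) :
    ∫ x, (x i - m i) ^ 2 * gaussPdfD d x m v = v := by
  simp only [gaussPdfD_eq_prod hv.le]
  rw [integral_comp_mul_fintype_prod_volume (fun t => (t - m i) ^ 2)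
    (fun j => gaussianPDFReal (m j) v.toNNReal) i]
  simp [integral_sq_sub_mul_gaussianPDFReal, hv.le,
    integral_gaussianPDFReal_eq_one _ (Real.toNNReal_pos.mpr hv).ne']

lemma integrable_sq_sub_mul_gaussPdfD (hv : 0 < v) (i : Fin d) :
    Integrable fun x => (x i - m i) ^ 2 * gaussPdfD d x m v :=
  .of_integral_ne_zero (by rw [integral_sq_sub_mul_gaussPdfD hv]; exact hv.ne')

lemma integrable_sum_sq_sub_mul_gaussPdfD (hv : 0 < v) :
    Integrable fun x => (∑ i, (x i - m i) ^ 2) * gaussPdfD d x m v := by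
  simpa only [sum_mul] using
    integrable_finsetSum _ fun i _ => integrable_sq_sub_mul_gaussPdfD (m := m) hv i

lemma integral_sum_sq_sub_mul_gaussPdfD (hv : 0 < v) :
    ∫ x, (∑ i, (x i - m i) ^ 2) * gaussPdfD d x m v = d * v := by
  simp only [sum_mul]
  rw [integral_finsetSum _ fun i _ => integrable_sq_sub_mul_gaussPdfD hv i]
  simp [integral_sq_sub_mul_gaussPdfD hv]

theorem gaussPdfD_mul_gaussPdfD {m₁ m₂ : Fin d → ℝ} {a b : ℝ} (ha : 0 < a) (hb : 0 < b) :
    gaussPdfD d x m₁ a * gaussPdfD d x m₂ b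
      = gaussPdfD d m₁ m₂ (a + b)
        * gaussPdfD d x (fun i => (b * m₁ i + a * m₂ i) / (a + b)) (a * b / (a + b)) := by
  have hab : 0 < a + b := add_pos ha hb
  have hconst : (2 * Real.pi * a) * (2 * Real.pi * b)
      = (2 * Real.pi * (a + b)) * (2 * Real.pi * (a * b / (a + b))) := by
    field_simp
  have hexp : ∀ i, (x i - m₁ i) ^ 2 / a + (x i - m₂ i) ^ 2 / b
      = (m₁ i - m₂ i) ^ 2 / (a + b)
        + (x i - (b * m₁ i + a * m₂ i) / (a + b)) ^ 2 / (a * b / (a + b)) := by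
    intro i
    field_simp
    ring
  have hsplit : ∀ (p q : Fin d → ℝ) (c e : ℝ), -(∑ i, p i) / (2 * c) + -(∑ i, q i) / (2 * e)
      = -(∑ i, (p i / c + q i / e)) / 2 := by
    intro p q c e
    rw [sum_add_distrib, ← sum_div, ← sum_div]
    ring
  calc gaussPdfD d x m₁ a * gaussPdfD d x m₂ b
      = ((2 * Real.pi * a) * (2 * Real.pi * b)) ^ (-(d : ℝ) / 2)
          * Real.exp (-(∑ i, ((x i - m₁ i) ^ 2 / a + (x i - m₂ i) ^ 2 / b)) / 2) := by
        rw [Real.mul_rpow (by positivity) (by positivity), ← hsplit, Real.exp_add, gaussPdfD,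
          gaussPdfD]
        ring
    _ = _ := by
        rw [hconst, Real.mul_rpow (by positivity) (by positivity), sum_congr rfl fun i _ => hexp i,
          ← hsplit, Real.exp_add, gaussPdfD, gaussPdfD]
        ring

theorem integral_quadratic_mul_gaussPdfD_mul_gaussPdfD {a b : ℝ} (ha : 0 < a) (hb : 0 < b)
    (c₀ c₂ : ℝ) :
    ∫ y, (c₂ * ∑ i, y i ^ 2 - c₀) * gaussPdfD d y 0 a * gaussPdfD d y 0 b
      = (2 * Real.pi * (a + b)) ^ (-(d : ℝ) / 2) * (c₂ * (d * (a * b / (a + b))) - c₀) := by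
  set v := a * b / (a + b)
  have hv : 0 < v := by positivity
  have hmean : (fun i => (b * (0 : Fin d → ℝ) i + a * (0 : Fin d → ℝ) i) / (a + b)) = 0 := by
    ext; simp
  have hprod : ∀ y, gaussPdfD d y 0 a * gaussPdfD d y 0 b
      = (2 * Real.pi * (a + b)) ^ (-(d : ℝ) / 2) * gaussPdfD d y 0 v := fun y => by
    rw [gaussPdfD_mul_gaussPdfD ha hb, hmean, gaussPdfD_self]
  have hmom : ∫ y, (∑ i, y i ^ 2) * gaussPdfD d y 0 v = d * v := by
    simpa using integral_sum_sq_sub_mul_gaussPdfD (m := 0) hv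
  have hmom_int : Integrable fun y => (∑ i, y i ^ 2) * gaussPdfD d y 0 v := by
    simpa using integrable_sum_sq_sub_mul_gaussPdfD (m := 0) hv
  calc ∫ y, (c₂ * ∑ i, y i ^ 2 - c₀) * gaussPdfD d y 0 a * gaussPdfD d y 0 b
      = ∫ y, (2 * Real.pi * (a + b)) ^ (-(d : ℝ) / 2)
          * (c₂ * ((∑ i, y i ^ 2) * gaussPdfD d y 0 v) - c₀ * gaussPdfD d y 0 v) := by
        congr 1 with y
        rw [mul_assoc, hprod]
        ring
    _ = _ := by
        rw [integral_const_mul, integral_sub (hmom_int.const_mul c₂)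
          ((integrable_gaussPdfD hv.le).const_mul c₀), integral_const_mul, integral_const_mul,
          hmom, integral_gaussPdfD hv, mul_one]

end GaussPdfD

theorem gaussian_scale_mean_estimating_function_general (d : ℕ) (hd : 1 ≤ d)
    (l s : ℝ) (hs : 0 < s) :
    (∫ y : Fin d → ℝ,
        -(((d : ℝ) * s / (s + l ^ 2)) - (∑ i, y i ^ 2) * s / (s + l ^ 2) ^ 2)
          * gaussPdfD d y 0 (s + l ^ 2) * gaussPdfD d y 0 s)
      = -((2 * Real.pi) ^ (-(d : ℝ) / 2) * (l ^ 2 + 2 * s) ^ (-(d : ℝ) / 2)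
          * ((d : ℝ) * s / (s + l ^ 2)) * (1 - s / (l ^ 2 + 2 * s)))
    ∧ (∫ y : Fin d → ℝ,
        -(((d : ℝ) * s / (s + l ^ 2)) - (∑ i, y i ^ 2) * s / (s + l ^ 2) ^ 2)
          * gaussPdfD d y 0 (s + l ^ 2) * gaussPdfD d y 0 s) ≠ 0 := by
  have ha : 0 < s + l ^ 2 := by positivity
  have hsum : s + l ^ 2 + s = l ^ 2 + 2 * s := by ring
  have hvalue := integral_quadratic_mul_gaussPdfD_mul_gaussPdfD (d := d) ha hs
    ((d : ℝ) * s / (s + l ^ 2)) (s / (s + l ^ 2) ^ 2)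
  refine (and_iff_left_of_imp fun heq => ?_).2 ?_
  · have hd' : (0 : ℝ) < d := by exact_mod_cast hd
    have hfrac : 0 < 1 - s / (l ^ 2 + 2 * s) := by
      rw [sub_pos, div_lt_one (by positivity)]
      linarith [sq_nonneg l]
    rw [heq, neg_ne_zero]
    positivity
  · convert hvalue using 1
    · congr 1 with y
      ring
    · rw [hsum, Real.mul_rpow (x := 2 * Real.pi) (y := l ^ 2 + 2 * s) (by positivity)
        (by positivity)]
      field_simp
      ring

/-- Mean estimating-function value `M̄` for the Gaussian scale model in
dimension `d`, with `s = e^{2θ*}` and Gaussian kernel of lengthscale `l`.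
After integration by parts,
`M̄ = −∫ (ds/(s+l²) − |y|²s/(s+l²)²) φ(y;0,s+l²) φ(y;0,s) dy`, and this
equals `−(2π)^{-d/2}(l²+2s)^{-d/2}(ds/(s+l²))(1 − s/(l²+2s))`; in particular
`M̄ ≠ 0` for all finite `l > 0`, `d ≥ 1`, `s > 0`. -/
theorem gaussian_scale_mean_estimating_function (d : ℕ) (hd : 1 ≤ d)
    (l s : ℝ) (hl : 0 < l) (hs : 0 < s) :
    (∫ y : Fin d → ℝ,
        -(((d : ℝ) * s / (s + l ^ 2)) - (∑ i, y i ^ 2) * s / (s + l ^ 2) ^ 2)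
          * gaussPdfD d y 0 (s + l ^ 2) * gaussPdfD d y 0 s)
      = -((2 * Real.pi) ^ (-(d : ℝ) / 2) * (l ^ 2 + 2 * s) ^ (-(d : ℝ) / 2)
          * ((d : ℝ) * s / (s + l ^ 2)) * (1 - s / (l ^ 2 + 2 * s)))
    ∧ (∫ y : Fin d → ℝ,
        -(((d : ℝ) * s / (s + l ^ 2)) - (∑ i, y i ^ 2) * s / (s + l ^ 2) ^ 2)
          * gaussPdfD d y 0 (s + l ^ 2) * gaussPdfD d y 0 s) ≠ 0 :=
  gaussian_scale_mean_estimating_function_general d hd l s hs
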